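/- Assume the Trudinger–Moser property holds with some constant ω ∈ (0,π] and that f satisfies hypotheses (H). Then every Palais–Smale sequence for φ is bounded in X: if (u_n) ⊂ X satisfies φ(u_n) → c for some c ∈ ℝ and sup{|⟨φ'(u_n), v⟩| : v ∈ X, ‖v‖_X ≤ 1} → 0, then sup_n ‖u_n‖_X < ∞. -/

import Mathlib

open MeasureTheory Real Set Filter Topology

noncomputable section

/-- Integrand of the squared Gagliardo `H^{1/2}` seminorm on `ℝ`. -/
def gagKer (u : ℝ → ℝ) : ℝ × ℝ → ℝ :=
  fun p => (u p.1 - u p.2) ^ 2 / |p.1 - p.2| ^ 2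

/-- Integrand of the Gagliardo inner product `⟨u,v⟩_X`. -/
def innerKer (u v : ℝ → ℝ) : ℝ × ℝ → ℝ :=
  fun p => (u p.1 - u p.2) * (v p.1 - v p.2) / |p.1 - p.2| ^ 2

/-- `u ∈ H^{1/2}(ℝ)` : `u ∈ L²(ℝ)` with finite Gagliardo seminorm. -/
def memH (u : ℝ → ℝ) : Prop :=
  Measurable u ∧ Integrable (fun x => (u x) ^ 2) ∧ Integrable (gagKer u)

/-- Squared Gagliardo seminorm `[u]²`. -/
def gagSq (u : ℝ → ℝ) : ℝ := ∫ p : ℝ × ℝ, gagKer u p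

/-- Gagliardo seminorm `[u]`, i.e. the norm `‖u‖_X`. -/
def gagNorm (u : ℝ → ℝ) : ℝ := Real.sqrt (gagSq u)

/-- Inner product `⟨u, v⟩_X`. -/
def innerX (u v : ℝ → ℝ) : ℝ := ∫ p : ℝ × ℝ, innerKer u v p

/-- `u ∈ X` : `u ∈ H^{1/2}(ℝ)` and `u = 0` a.e. outside `(0,1)`. -/
def memX (u : ℝ → ℝ) : Prop :=
  memH u ∧ ∀ᵐ x : ℝ, x ∉ Ioo (0 : ℝ) 1 → u x = 0

/-- `λ₁ = inf {[u]² : u ∈ X, ‖u‖_{L²(0,1)} = 1}`. -/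
def lam1 : ℝ :=
  sInf { t : ℝ | ∃ u : ℝ → ℝ, memX u ∧ (∫ x in Ioo (0 : ℝ) 1, (u x) ^ 2) = 1 ∧ gagSq u = t }

/-- Trudinger–Moser property with constant `ω`. -/
def TMprop (ω : ℝ) : Prop :=
  ∀ α : ℝ, 0 < α → α < 2 * π * ω →
    ∃ K : ℝ, 0 < K ∧ ∀ u : ℝ → ℝ, memX u → gagNorm u ≤ 1 →
      (∫⁻ x in Ioo (0 : ℝ) 1, ENNReal.ofReal (exp (α * (u x) ^ 2))) ≤ ENNReal.ofReal K

/-- The primitive `F(t) = ∫₀ᵗ f(τ) dτ`. -/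
def primF (f : ℝ → ℝ) : ℝ → ℝ := fun t => ∫ τ in (0 : ℝ)..t, f τ

/-- Hypotheses (H). -/
def HypH (f : ℝ → ℝ) : Prop :=
  Continuous f ∧ f 0 = 0 ∧
  (∃ t₀ > (0 : ℝ), ∃ M > (0 : ℝ),
    ∀ t : ℝ, t₀ ≤ |t| → 0 < primF f t ∧ primF f t ≤ M * |f t|) ∧
  (∀ t : ℝ, t ≠ 0 → 0 < 2 * primF f t ∧ 2 * primF f t ≤ f t * t) ∧
  (Filter.limsup (fun t => primF f t / t ^ 2) (𝓝[≠] (0 : ℝ)) < lam1 / (4 * π)) ∧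
  (∀ α : ℝ, 0 < α →
    Filter.Tendsto (fun t => |f t| * exp (-α * t ^ 2)) (Filter.cocompact ℝ) (𝓝 0))

/-- Hypotheses (H') with Trudinger–Moser constant `ω`. -/
def HypH' (f : ℝ → ℝ) (ω : ℝ) : Prop :=
  Continuous f ∧ f 0 = 0 ∧
  (∃ t₀ > (0 : ℝ), ∃ M > (0 : ℝ),
    ∀ t : ℝ, t₀ ≤ |t| → 0 < primF f t ∧ primF f t ≤ M * |f t|) ∧
  (∀ t : ℝ, t ≠ 0 → 0 < 2 * primF f t ∧ 2 * primF f t ≤ f t * t) ∧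
  (Filter.limsup (fun t => primF f t / t ^ 2) (𝓝[≠] (0 : ℝ)) < lam1 / (4 * π)) ∧
  ∃ α₀ : ℝ, 0 < α₀ ∧ α₀ < 2 * π * ω ∧
    (∀ α : ℝ, 0 < α → α < α₀ →
      Filter.Tendsto (fun t => |f t| * exp (-α * t ^ 2)) (Filter.cocompact ℝ) Filter.atTop) ∧
    (∀ α : ℝ, α₀ < α →
      Filter.Tendsto (fun t => |f t| * exp (-α * t ^ 2)) (Filter.cocompact ℝ) (𝓝 0)) ∧
    ∃ ψ : ℝ → ℝ, memX ψ ∧ gagNorm ψ = 1 ∧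
      ∃ b : ℝ, b < ω / (2 * α₀) ∧ ∀ t : ℝ, 0 < t →
        t ^ 2 / (4 * π) - (∫ x in Ioo (0 : ℝ) 1, primF f (t * ψ x)) ≤ b

/-- `u` is a (weak) solution of `(-Δ)^{1/2} u = f(u)` in `(0,1)`, `u = 0` outside. -/
def IsWeakSolution (f u : ℝ → ℝ) : Prop :=
  memX u ∧ ∀ v : ℝ → ℝ, memX v →
    IntegrableOn (fun x => f (u x) * v x) (Ioo (0 : ℝ) 1) ∧
    innerX u v / (2 * π) = ∫ x in Ioo (0 : ℝ) 1, f (u x) * v x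

/-- The energy functional `φ(u) = ‖u‖_X²/(4π) - ∫₀¹ F(u) dx`. -/
def phi (f u : ℝ → ℝ) : ℝ :=
  gagSq u / (4 * π) - ∫ x in Ioo (0 : ℝ) 1, primF f (u x)

/-- `⟨φ'(u), v⟩ = (1/(2π))⟨u,v⟩_X - ∫₀¹ f(u) v dx`. -/
def phiDeriv (f u v : ℝ → ℝ) : ℝ :=
  innerX u v / (2 * π) - ∫ x in Ioo (0 : ℝ) 1, f (u x) * v x

/-- The Palais–Smale condition at level `c`. -/
def PalaisSmaleAt (f : ℝ → ℝ) (c : ℝ) : Prop :=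
  ∀ u : ℕ → ℝ → ℝ, (∀ n, memX (u n)) →
    Filter.Tendsto (fun n => phi f (u n)) Filter.atTop (𝓝 c) →
    (∃ ε : ℕ → ℝ, Filter.Tendsto ε Filter.atTop (𝓝 0) ∧
      ∀ n, ∀ v : ℝ → ℝ, memX v → gagNorm v ≤ 1 → |phiDeriv f (u n) v| ≤ ε n) →
    ∃ w : ℝ → ℝ, memX w ∧ ∃ g : ℕ → ℕ, StrictMono g ∧
      Filter.Tendsto (fun k => gagNorm (fun x => u (g k) x - w x)) Filter.atTop (𝓝 0)

/-! The Ambrosetti–Rabinowitz argument. By (H)(i),(ii), `4F(s) ≤ f(s)s + B` for some `B`, so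
testing `φ'(u)` against `u` itself gives
`‖u‖²/(2π) ≤ 4φ(u) - ⟨φ'(u), u⟩ + B ≤ 4|φ(u)| + ε‖u‖ + B`.
Along a Palais–Smale sequence `φ(uₙ)` and `εₙ` are bounded, and this quadratic inequality
bounds `‖uₙ‖`. -/

lemma gagKer_smul (a : ℝ) (u : ℝ → ℝ) : gagKer (a • u) = fun p => a ^ 2 * gagKer u p := by
  funext p
  simp only [gagKer, Pi.smul_apply, smul_eq_mul]
  ring

lemma memX.const_smul {u : ℝ → ℝ} (hu : memX u) (a : ℝ) : memX (a • u) := by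
  obtain ⟨⟨hum, hu2, hugag⟩, hu0⟩ := hu
  refine ⟨⟨hum.const_smul a, ?_, ?_⟩, ?_⟩
  · simpa only [Pi.smul_apply, smul_eq_mul, mul_pow] using hu2.const_mul (a ^ 2)
  · simpa only [gagKer_smul] using hugag.const_mul (a ^ 2)
  · filter_upwards [hu0] with x hx hxI
    simp [hx hxI]

lemma gagSq_nonneg (u : ℝ → ℝ) : 0 ≤ gagSq u :=
  integral_nonneg fun _ => div_nonneg (sq_nonneg _) (sq_nonneg _)

lemma gagNorm_sq (u : ℝ → ℝ) : gagNorm u ^ 2 = gagSq u :=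
  Real.sq_sqrt (gagSq_nonneg u)

lemma gagNorm_nonneg (u : ℝ → ℝ) : 0 ≤ gagNorm u :=
  Real.sqrt_nonneg _

lemma gagSq_smul (a : ℝ) (u : ℝ → ℝ) : gagSq (a • u) = a ^ 2 * gagSq u := by
  rw [gagSq, gagKer_smul, integral_const_mul, gagSq]

lemma gagNorm_smul (a : ℝ) (u : ℝ → ℝ) : gagNorm (a • u) = |a| * gagNorm u := by
  rw [gagNorm, gagSq_smul, Real.sqrt_mul (sq_nonneg a), Real.sqrt_sq_eq_abs, gagNorm]

lemma innerX_self (u : ℝ → ℝ) : innerX u u = gagSq u := by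
  unfold innerX gagSq innerKer gagKer
  simp only [← sq]

lemma innerX_smul_right (a : ℝ) (u v : ℝ → ℝ) : innerX u (a • v) = a * innerX u v := by
  rw [innerX, innerX, ← integral_const_mul]
  congr 1 with p
  simp only [innerKer, Pi.smul_apply, smul_eq_mul]
  ring

section Energy

variable {f : ℝ → ℝ}

lemma phiDeriv_self (u : ℝ → ℝ) :
    phiDeriv f u u = gagSq u / (2 * π) - ∫ x in Ioo (0 : ℝ) 1, f (u x) * u x := by
  rw [phiDeriv, innerX_self]

lemma phiDeriv_smul (u : ℝ → ℝ) (a : ℝ) (v : ℝ → ℝ) :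
    phiDeriv f u (a • v) = a * phiDeriv f u v := by
  simp only [phiDeriv, innerX_smul_right, Pi.smul_apply, smul_eq_mul, mul_left_comm _ a,
    integral_const_mul]
  ring

lemma abs_phiDeriv_le_mul_gagNorm {u w : ℝ → ℝ} {e : ℝ}
    (hd : ∀ v, memX v → gagNorm v ≤ 1 → |phiDeriv f u v| ≤ e) (hw : memX w) :
    |phiDeriv f u w| ≤ e * gagNorm w := by
  have hscaled : ∀ s : ℝ, 0 < s → s * gagNorm w ≤ 1 → s * |phiDeriv f u w| ≤ e := by
    intro s hs hsw
    have h := hd (s • w) (hw.const_smul s) (by rwa [gagNorm_smul, abs_of_pos hs])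
    rwa [phiDeriv_smul, abs_mul, abs_of_pos hs] at h
  rcases (gagNorm_nonneg w).eq_or_lt with hw0 | hwpos
  · -- a null `w` can be tested at every scale, which forces `φ'(u) w = 0`
    rw [← hw0, mul_zero]
    by_contra! hpos
    have h := hscaled ((|e| + 1) / |phiDeriv f u w|) (by positivity)
      (by rw [← hw0, mul_zero]; exact zero_le_one)
    rw [div_mul_cancel₀ _ hpos.ne'] at h
    linarith [le_abs_self e]
  · have h := hscaled (gagNorm w)⁻¹ (inv_pos.mpr hwpos) (inv_mul_cancel₀ hwpos.ne').le
    rwa [inv_mul_le_iff₀ hwpos, mul_comm] at h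

variable {B : ℝ} (hF : ∀ s, 0 ≤ primF f s) (hB : ∀ s, 4 * primF f s ≤ f s * s + B)
include hF hB

lemma gagSq_div_le_of_integrableOn {u : ℝ → ℝ}
    (hint : IntegrableOn (fun x => f (u x) * u x) (Ioo (0 : ℝ) 1)) :
    gagSq u / (2 * π) ≤ 4 * phi f u - phiDeriv f u u + B := by
  have hmono : 4 * ∫ x in Ioo (0 : ℝ) 1, primF f (u x)
      ≤ (∫ x in Ioo (0 : ℝ) 1, f (u x) * u x) + B := by
    have hBint : IntegrableOn (fun _ => B) (Ioo (0 : ℝ) 1) := by simp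
    calc 4 * ∫ x in Ioo (0 : ℝ) 1, primF f (u x)
        = ∫ x in Ioo (0 : ℝ) 1, 4 * primF f (u x) := (integral_const_mul _ _).symm
      _ ≤ ∫ x in Ioo (0 : ℝ) 1, (f (u x) * u x + B) :=
          integral_mono_of_nonneg (.of_forall fun x => mul_nonneg zero_le_four (hF (u x)))
            (hint.add hBint) (.of_forall fun x => hB (u x))
      _ = (∫ x in Ioo (0 : ℝ) 1, f (u x) * u x) + B := by
          rw [integral_add hint hBint, setIntegral_const]
          simp
  rw [phiDeriv_self, phi]
  have hπ : 0 < π := Real.pi_pos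
  field_simp
  linarith [mul_le_mul_of_nonneg_left hmono (by positivity : (0 : ℝ) ≤ 2 * π)]

lemma gagSq_div_le_energy (u : ℝ → ℝ) :
    gagSq u / (2 * π) ≤ 4 * |phi f u| + |phiDeriv f u u| + B := by
  have hB0 : 0 ≤ B := by linarith [hF 0, hB 0]
  by_cases hint : IntegrableOn (fun x => f (u x) * u x) (Ioo (0 : ℝ) 1)
  · linarith [gagSq_div_le_of_integrableOn hF hB hint, le_abs_self (phi f u),
      neg_abs_le (phiDeriv f u u)]
  · -- the integral of `f(u)u` then takes the junk value `0`
    have hderiv : phiDeriv f u u = gagSq u / (2 * π) := by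
      rw [phiDeriv_self, integral_undef hint, sub_zero]
    linarith [le_abs_self (phiDeriv f u u), abs_nonneg (phi f u)]

end Energy

lemma continuous_primF {f : ℝ → ℝ} (hf : Continuous f) : Continuous (primF f) :=
  intervalIntegral.continuous_primitive (fun a b => hf.intervalIntegrable a b) 0

lemma exists_mul_primF_le_add {f : ℝ → ℝ} (hf : Continuous f) {θ t₀ M : ℝ}
    (hθ : 0 ≤ θ) (hFM : ∀ t, t₀ ≤ |t| → primF f t ≤ M * |f t|)
    (hfnn : ∀ t, 0 ≤ f t * t) :
    ∃ B, ∀ s, θ * primF f s ≤ f s * s + B := by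
  set T := max t₀ (θ * M)
  obtain ⟨B, hB⟩ := isCompact_Icc.bddAbove_image
    ((continuous_const.mul (continuous_primF hf)).continuousOn :
      ContinuousOn (fun s => θ * primF f s) (Icc (-T) T))
  refine ⟨max B 0, fun s => ?_⟩
  by_cases hs : |s| ≤ T
  · have hθF : θ * primF f s ≤ B := hB (mem_image_of_mem _ (abs_le.mp hs))
    linarith [hfnn s, le_max_left B 0]
  · have hsM : θ * M ≤ |s| := le_trans (le_max_right _ _) (not_le.mp hs).le
    have hFs := hFM s (le_trans (le_max_left _ _) (not_le.mp hs).le)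
    have hfs : |f s| * |s| = f s * s := by rw [← abs_mul, abs_of_nonneg (hfnn s)]
    nlinarith [mul_le_mul_of_nonneg_left hFs hθ, abs_nonneg (f s), le_max_right B 0]

lemma le_max_one_of_sq_le {t a b : ℝ} (hb : 0 ≤ b) (h : t ^ 2 ≤ a * t + b) :
    t ≤ max 1 (a + b) := by
  by_cases ht : t ≤ 1
  · exact le_max_of_le_left ht
  · exact le_max_of_le_right (by nlinarith)

namespace HypH

variable {f : ℝ → ℝ} (hf : HypH f)
include hf

lemma primF_nonneg (t : ℝ) : 0 ≤ primF f t := by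
  rcases eq_or_ne t 0 with rfl | ht
  · exact intervalIntegral.integral_same.ge
  · linarith [(hf.2.2.2.1 t ht).1]

lemma apply_mul_self_nonneg (t : ℝ) : 0 ≤ f t * t := by
  rcases eq_or_ne t 0 with rfl | ht
  · rw [mul_zero]
  · linarith [(hf.2.2.2.1 t ht).2, hf.primF_nonneg t]

lemma exists_four_mul_primF_le : ∃ B, ∀ s, 4 * primF f s ≤ f s * s + B := by
  obtain ⟨t₀, -, M, -, hFM⟩ := hf.2.2.1
  exact exists_mul_primF_le_add hf.1 zero_le_four (fun t ht => (hFM t ht).2)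
    hf.apply_mul_self_nonneg

end HypH

theorem statement16_general (f : ℝ → ℝ) (hf : HypH f)
    (u : ℕ → ℝ → ℝ) (huX : ∀ n, memX (u n)) (c : ℝ)
    (hphi : Filter.Tendsto (fun n => phi f (u n)) Filter.atTop (𝓝 c))
    (hderiv : ∃ ε : ℕ → ℝ, Filter.Tendsto ε Filter.atTop (𝓝 0) ∧
      ∀ n, ∀ v : ℝ → ℝ, memX v → gagNorm v ≤ 1 → |phiDeriv f (u n) v| ≤ ε n) :
    ∃ C : ℝ, ∀ n, gagNorm (u n) ≤ C := by
  obtain ⟨B, hB⟩ := hf.exists_four_mul_primF_le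
  have hB0 : 0 ≤ B := by linarith [hf.primF_nonneg 0, hB 0]
  obtain ⟨ε, hε, hd⟩ := hderiv
  obtain ⟨E, hE⟩ := hε.abs.bddAbove_range
  obtain ⟨Φ, hΦ⟩ := hphi.abs.bddAbove_range
  have hΦ0 : 0 ≤ Φ := (abs_nonneg _).trans (hΦ ⟨0, rfl⟩)
  refine ⟨max 1 (2 * π * E + 2 * π * (4 * Φ + B)),
    fun n => le_max_one_of_sq_le (by positivity) ?_⟩
  have hderiv_self : |phiDeriv f (u n) (u n)| ≤ E * gagNorm (u n) :=
    (abs_phiDeriv_le_mul_gagNorm (hd n) (huX n)).trans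
      (mul_le_mul_of_nonneg_right ((le_abs_self _).trans (hE ⟨n, rfl⟩)) (gagNorm_nonneg _))
  calc gagNorm (u n) ^ 2 = 2 * π * (gagSq (u n) / (2 * π)) := by
        rw [gagNorm_sq]; field_simp
    _ ≤ 2 * π * (4 * |phi f (u n)| + |phiDeriv f (u n) (u n)| + B) := by
        gcongr; exact gagSq_div_le_energy hf.primF_nonneg hB (u n)
    _ ≤ 2 * π * (4 * Φ + E * gagNorm (u n) + B) := by
        gcongr; exact hΦ ⟨n, rfl⟩
    _ = 2 * π * E * gagNorm (u n) + 2 * π * (4 * Φ + B) := by ring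

/-- Palais–Smale sequences are bounded in `X`. -/
theorem statement16 (ω : ℝ) (hω0 : 0 < ω) (hωπ : ω ≤ π) (hTM : TMprop ω)
    (f : ℝ → ℝ) (hf : HypH f)
    (u : ℕ → ℝ → ℝ) (huX : ∀ n, memX (u n)) (c : ℝ)
    (hphi : Filter.Tendsto (fun n => phi f (u n)) Filter.atTop (𝓝 c))
    (hderiv : ∃ ε : ℕ → ℝ, Filter.Tendsto ε Filter.atTop (𝓝 0) ∧
      ∀ n, ∀ v : ℝ → ℝ, memX v → gagNorm v ≤ 1 → |phiDeriv f (u n) v| ≤ ε n) :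
    ∃ C : ℝ, ∀ n, gagNorm (u n) ≤ C :=
  statement16_general f hf u huX c hphi hderiv
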